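/- For every simplicial set X, every Kan complex K, and every map f : K → X, there exists a unique map g : K → G(X) such that ε_X ∘ g = f. (Thus G is a right adjoint to the identity functor on simplicial sets relative to Kan complexes.) -/

import Mathlib

open CategoryTheory Simplicial CategoryTheory.Limits Opposite

namespace IndexedPaper
/-- The chaotic preorder on two objects. -/
inductive TwoObj : Type where
  | zero
  | one

instance : Preorder TwoObj where
  le _ _ := True
  le_refl _ := trivial
  le_trans _ _ _ _ _ := trivial

/-- `bΔ[1]`, the nerve of the groupoid with two objects and exactly one morphism
between every ordered pair of objects. -/
def bDelta1 : SSet := CategoryTheory.nerve TwoObj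

/-- `δ : Δ[1] ⟶ bΔ[1]`, classifying the morphism from the first object to the second. -/
noncomputable def deltaB : Δ[1] ⟶ bDelta1 :=
  (SSet.yonedaEquiv (X := bDelta1) (n := ⦋1⦌)).symm
    (CategoryTheory.ComposableArrows.mk₁ (homOfLE trivial : TwoObj.zero ⟶ TwoObj.one))

/-- An edge `x : Δ[1] ⟶ X` is invertible if it extends along `δ` to `bΔ[1]`. -/
def IsInvertibleEdge {X : SSet} (x : Δ[1] ⟶ X) : Prop :=
  ∃ y : bDelta1 ⟶ X, deltaB ≫ y = x

/-- A Kan complex: every horn (`n ≥ 1`, `0 ≤ k ≤ n`) has a filler. -/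
def IsKanComplex (K : SSet) : Prop :=
  ∀ ⦃n : ℕ⦄, 1 ≤ n → ∀ (k : Fin (n + 1)) (f : (Λ[n, k] : SSet) ⟶ K),
    ∃ g : Δ[n] ⟶ K, (Λ[n, k]).ι ≫ g = f

/-- A Kan fibration: right lifting property with respect to all horn inclusions
(`n ≥ 1`, `0 ≤ k ≤ n`). -/
def IsKanFibration {X Y : SSet} (p : X ⟶ Y) : Prop :=
  ∀ ⦃n : ℕ⦄, 1 ≤ n → ∀ (k : Fin (n + 1)), HasLiftingProperty (Λ[n, k]).ι p

/-! ### Yoneda naturality lemmas -/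

lemma yE_comp {X Y : SSet} (f : X ⟶ Y) {n : SimplexCategory}
    (g : SSet.stdSimplex.obj n ⟶ X) :
    SSet.yonedaEquiv (X := Y) (n := n) (g ≫ f) = f.app (op n) (SSet.yonedaEquiv (X := X) (n := n) g) := rfl

lemma yE_symm_comp {X Y : SSet} (f : X ⟶ Y) {n : SimplexCategory} (x : X.obj (op n)) :
    (SSet.yonedaEquiv (X := Y) (n := n)).symm (f.app (op n) x) = (SSet.yonedaEquiv (X := X) (n := n)).symm x ≫ f := by
  apply (SSet.yonedaEquiv (X := Y) (n := n)).injective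
  rw [Equiv.apply_symm_apply, yE_comp, Equiv.apply_symm_apply]

lemma yE_symm_map {X : SSet} {m n : SimplexCategory} (f : m ⟶ n) (x : X.obj (op n)) :
    (SSet.yonedaEquiv (X := X) (n := m)).symm (X.map f.op x) =
      SSet.stdSimplex.map f ≫ (SSet.yonedaEquiv (X := X) (n := n)).symm x := by
  exact uliftYonedaEquiv_symm_map f.op x

/-! ### The functor `G` -/

/-- The set of simplices of `X` all of whose edges are invertible. -/
def GSet (X : SSet) (n : SimplexCategoryᵒᵖ) : Set (X.obj n) :=
  {x | ∀ e : Δ[1] ⟶ SSet.stdSimplex.obj n.unop,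
    IsInvertibleEdge (e ≫ (SSet.yonedaEquiv (X := X) (n := n.unop)).symm x)}

/-- `G X`, the simplicial subset of `X` consisting of the simplices all of whose
edges are invertible. -/
def GObj (X : SSet) : SSet where
  obj n := GSet X n
  map := fun {n m} f => TypeCat.ofHom fun x => ⟨X.map f x.1, by
    intro e
    have h := x.2 (e ≫ SSet.stdSimplex.map f.unop)
    have heq : (SSet.yonedaEquiv (X := X) (n := m.unop)).symm (X.map f x.1) =
        SSet.stdSimplex.map f.unop ≫ (SSet.yonedaEquiv (X := X) (n := n.unop)).symm x.1 :=
      yE_symm_map f.unop x.1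
    rw [heq, ← Category.assoc]
    exact h⟩
  map_id n := by
    ext x
    exact X.map_id_apply _ x.1
  map_comp f g := by
    ext x
    exact X.map_comp_apply f g x.1

/-- `ε_X : G X ⟶ X`, the inclusion. -/
def epsilon (X : SSet) : GObj X ⟶ X where
  app n := TypeCat.ofHom fun x => x.1
  naturality _ _ _ := rfl

/-- The functorial action of `G` on a map of simplicial sets. -/
def Gmap {X Y : SSet} (f : X ⟶ Y) : GObj X ⟶ GObj Y where
  app n := TypeCat.ofHom fun x => ⟨f.app n x.1, by
    intro e
    obtain ⟨y, hy⟩ := x.2 e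
    refine ⟨y ≫ f, ?_⟩
    have : (SSet.yonedaEquiv (X := Y) (n := n.unop)).symm (f.app n x.1) =
        (SSet.yonedaEquiv (X := X) (n := n.unop)).symm x.1 ≫ f := yE_symm_comp f x.1
    simp only [this, ← Category.assoc, hy]⟩
  naturality n m g := by
    ext x
    have h := NatTrans.naturality_apply f g x.1
    exact Subtype.ext h

/-!
Every edge of a Kan complex is invertible, because `δ : Δ[1] ⟶ bΔ[1]` is an anodyne extension.
The nondegenerate simplices of `bΔ[1]` are the alternating words `0101…` and `1010…`. Those
outside the image of `δ` pair off as `1010…` (dimension `s + 1`) with `0101…` (dimension `s + 2`),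
the former being the face `d₀` of the latter and no other face of it; this is a regular pairing
in the sense of Moss, so `δ` lifts against every Kan fibration. Hence any `f : K ⟶ X` out of a
Kan complex sends every simplex into `G X`, and the factorization is unique since `ε_X` is mono.
-/

open SSet

lemma mem_range_nerve_σ_iff {C : Type*} [Preorder C] {n : ℕ} (s : (nerve C) _⦋n + 1⦌)
    (i : Fin (n + 1)) :
    s ∈ Set.range ((nerve C).σ i) ↔ s.obj i.castSucc = s.obj i.succ := by
  constructor
  · rintro ⟨t, rfl⟩
    exact congrArg t.obj ((Fin.predAbove_castSucc_self i).trans (Fin.predAbove_succ_self i).symm)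
  · intro h
    refine ⟨(nerve C).δ i.castSucc s, nerve.ext_of_isThin (funext fun j => ?_)⟩
    show s.obj (i.castSucc.succAbove (i.predAbove j)) = s.obj j
    by_cases hj : j = i.castSucc
    · subst hj
      rw [Fin.predAbove_castSucc_self, Fin.succAbove_castSucc_self, h]
    · rw [Fin.succAbove_predAbove hj]

theorem mem_nerve_nonDegenerate_iff {C : Type*} [Preorder C] {n : ℕ} (s : (nerve C) _⦋n⦌) :
    s ∈ (nerve C).nonDegenerate n ↔ ∀ i : Fin n, s.obj i.castSucc ≠ s.obj i.succ := by
  cases n with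
  | zero => simp [nondegenerate_zero]
  | succ n =>
    simp only [← mem_range_nerve_σ_iff, ← not_exists, ← Set.mem_iUnion,
      ← degenerate_eq_iUnion_range_σ, mem_nonDegenerate_iff_notMem_degenerate]

namespace TwoObj

def swap (a : TwoObj) : TwoObj :=
  match a with
  | .zero => .one
  | .one => .zero

lemma swap_ne (a : TwoObj) : a.swap ≠ a := by
  cases a <;> nofun

lemma eq_swap_of_ne {a b : TwoObj} (h : b ≠ a) : b = a.swap := by
  cases a <;> cases b <;> first | rfl | exact absurd rfl h

end TwoObj

def alternating (a : TwoObj) (n : ℕ) : bDelta1 _⦋n⦌ :=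
  Monotone.functor (f := fun i : Fin (n + 1) => TwoObj.swap^[i] a) fun _ _ _ => trivial

lemma alternating_obj (a : TwoObj) (n : ℕ) (i : Fin (n + 1)) :
    (alternating a n).obj i = TwoObj.swap^[i] a := rfl

lemma alternating_mem_nonDegenerate (a : TwoObj) (n : ℕ) :
    alternating a n ∈ bDelta1.nonDegenerate n :=
  (mem_nerve_nonDegenerate_iff _).2 fun i => by
    simpa [alternating_obj, Function.iterate_succ_apply'] using (TwoObj.swap_ne _).symm

lemma eq_alternating_of_mem_nonDegenerate {n : ℕ} {s : bDelta1 _⦋n⦌}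
    (hs : s ∈ bDelta1.nonDegenerate n) : s = alternating (s.obj 0) n := by
  replace hs := (mem_nerve_nonDegenerate_iff (C := TwoObj) s).1 hs
  refine nerve.ext_of_isThin (funext fun ⟨i, hi⟩ => ?_)
  change i < n + 1 at hi
  induction i with
  | zero => exact congrArg s.obj (Fin.ext (Fin.val_zero _).symm)
  | succ i ih =>
    rw [alternating_obj, Function.iterate_succ_apply', ← alternating_obj (s.obj 0) n ⟨i, by omega⟩,
      ← ih (by omega)]
    exact TwoObj.eq_swap_of_ne (hs ⟨i, by omega⟩).symm

lemma δ_zero_alternating (a : TwoObj) (n : ℕ) :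
    bDelta1.δ 0 (alternating a (n + 1)) = alternating a.swap n :=
  nerve.ext_of_isThin (funext fun _ => Function.iterate_succ_apply _ _ _)

lemma deltaB_app_obj {n : ℕ} (x : Δ[1] _⦋n⦌) (i : Fin (n + 1)) :
    (deltaB.app _ x).obj i = if x i = 0 then .zero else .one := by
  change (ComposableArrows.mk₁ (homOfLE trivial : TwoObj.zero ⟶ TwoObj.one)).obj (x i) = _
  generalize x i = j
  fin_cases j <;> rfl

lemma mem_range_deltaB_iff {n : ℕ} (s : bDelta1 _⦋n⦌) :
    s ∈ (Subcomplex.range deltaB).obj (op ⦋n⦌) ↔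
      ∀ i j : Fin (n + 1), i ≤ j → s.obj i = .one → s.obj j = .one := by
  classical
  constructor
  · rintro ⟨x, rfl⟩ i j hij hi
    have hx := stdSimplex.monotone_apply x hij
    simp only [deltaB_app_obj] at hi ⊢
    split_ifs at hi ⊢ with h₁ h₂
    · exact absurd (Fin.le_zero_iff.1 (h₁ ▸ hx)) h₂
    · rfl
  · intro hs
    let x : Δ[1] _⦋n⦌ := stdSimplex.objEquiv.symm (SimplexCategory.Hom.mk
      ⟨fun i => if s.obj i = .one then 1 else 0, fun i j hij => by
        dsimp only
        split_ifs with hi hj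
        exacts [le_rfl, absurd (hs i j hij hi) hj, Fin.zero_le _, le_rfl]⟩)
    refine ⟨x, nerve.ext_of_isThin (funext fun i => ?_)⟩
    rw [deltaB_app_obj]
    change (if (if s.obj i = .one then (1 : Fin 2) else 0) = 0 then _ else _) = _
    cases s.obj i <;> simp

lemma alternating_mem_range_deltaB_iff (a : TwoObj) (n : ℕ) :
    alternating a n ∈ (Subcomplex.range deltaB).obj (op ⦋n⦌) ↔ n = 0 ∨ n = 1 ∧ a = .zero := by
  rw [mem_range_deltaB_iff]
  constructor
  · intro h
    by_contra hn
    cases a with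
    | zero =>
      simp only [and_true, not_or] at hn
      obtain ⟨m, rfl⟩ : ∃ m, n = m + 2 := ⟨n - 2, by omega⟩
      nomatch h ⟨1, by omega⟩ ⟨2, by omega⟩ (Fin.mk_le_mk.2 (by omega)) rfl
    | one =>
      simp only [reduceCtorEq, and_false, or_false] at hn
      obtain ⟨m, rfl⟩ : ∃ m, n = m + 1 := ⟨n - 1, by omega⟩
      nomatch h ⟨0, by omega⟩ ⟨1, by omega⟩ (Fin.mk_le_mk.2 (by omega)) rfl
  · rintro (rfl | ⟨rfl, rfl⟩) i j hij hi
    · rwa [Subsingleton.elim (α := Fin 1) j i]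
    · fin_cases i <;> fin_cases j
      · exact hi
      · cases hi
      · exact absurd hij (by decide)
      · exact hi

noncomputable def deltaBPairingCore : (Subcomplex.range deltaB).PairingCore where
  ι := ℕ
  dim s := s + 1
  simplex s := alternating .zero (s + 2)
  index _ := 0
  nonDegenerate₁ s := alternating_mem_nonDegenerate _ _
  nonDegenerate₂ s := by
    rw [δ_zero_alternating]
    exact alternating_mem_nonDegenerate _ _
  notMem₁ s := by
    rw [alternating_mem_range_deltaB_iff]
    omega
  notMem₂ s := by
    rw [δ_zero_alternating, alternating_mem_range_deltaB_iff]
    simp [TwoObj.swap]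
  injective_type₁' h := by simpa using S.dim_eq_of_mk_eq h
  injective_type₂' h := by simpa using S.dim_eq_of_mk_eq h
  type₁_ne_type₂' s t h := by
    obtain rfl : t = s + 1 := by simpa using (S.dim_eq_of_mk_eq h).symm
    rw [δ_zero_alternating, S.ext_iff] at h
    nomatch congrArg (fun x => x.obj 0) h
  surjective' x := by
    obtain ⟨n, s, hs, hs', rfl⟩ := x.mk_surjective
    change ∃ t, S.mk s = _ ∨ S.mk s = _
    rw [eq_alternating_of_mem_nonDegenerate hs] at hs' ⊢
    rw [alternating_mem_range_deltaB_iff] at hs'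
    generalize s.obj 0 = a at hs' ⊢
    cases a with
    | zero =>
      obtain ⟨m, rfl⟩ : ∃ m, n = m + 2 := ⟨n - 2, by simp at hs'; omega⟩
      exact ⟨m, Or.inl rfl⟩
    | one =>
      obtain ⟨m, rfl⟩ : ∃ m, n = m + 1 := ⟨n - 1, by simp at hs'; omega⟩
      exact ⟨m, Or.inr (by rw [δ_zero_alternating]; rfl)⟩

instance : deltaBPairingCore.IsRegular where
  isUniquelyCodimOneFace (s : ℕ) := by
    refine (S.IsUniquelyCodimOneFace.iff _ _).2 ⟨0, rfl, fun i hi => ?_⟩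
    by_contra hne
    have h := congrArg (fun x => x.obj 0) hi
    change (alternating .zero (s + 2)).obj (i.succAbove 0) = TwoObj.one at h
    rw [Fin.succAbove_ne_zero_zero hne] at h
    nomatch h
  wf := (wellFounded_lt (α := ℕ)).mono fun (s t : ℕ) ⟨(hne : s ≠ t), hlt⟩ => by
    have := SSet.N.dim_lt_of_lt (Subcomplex.N.lt_iff.1 hlt)
    change s + 1 < t + 1 + 1 at this
    omega

instance : Mono deltaB := by
  suffices ∀ n, Mono (deltaB.app n) from NatTrans.mono_of_mono_app _
  intro n
  induction n using Opposite.rec with | op n => ?_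
  induction n using SimplexCategory.rec with | _ n => ?_
  refine (mono_iff_injective _).2 fun x y h => SSet.stdSimplex.ext x y fun i => ?_
  have h := congrArg (fun s => s.obj i) h
  simp only [deltaB_app_obj] at h
  split_ifs at h <;> omega

lemma anodyneExtensions_deltaB : anodyneExtensions deltaB := by
  rw [← Subcomplex.toRange_ι deltaB]
  exact MorphismProperty.comp_mem _ _ _ (anodyneExtensions.of_isIso _)
    deltaBPairingCore.pairing.anodyneExtensions

open HomotopicalAlgebra modelCategoryQuillen in
lemma IsKanComplex.kanComplex {K : SSet} (hK : IsKanComplex K) : KanComplex K := by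
  rw [KanComplex, isFibrant_iff, fibration_iff]
  rintro _ _ _ h
  simp only [J, MorphismProperty.iSup_iff] at h
  obtain ⟨n, ⟨i⟩⟩ := h
  refine ⟨fun {f _} _ => ?_⟩
  obtain ⟨g, hg⟩ := hK (n := n + 1) (by omega) i f
  exact ⟨⟨⟨g, hg, terminal.hom_ext _ _⟩⟩⟩

open HomotopicalAlgebra modelCategoryQuillen in
lemma exists_extension_of_anodyneExtensions {A B K : SSet} [KanComplex K] {i : A ⟶ B}
    (hi : anodyneExtensions i) (x : A ⟶ K) : ∃ y : B ⟶ K, i ≫ y = x := by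
  have := hi _ (mem_fibrations (terminal.from K))
  have sq : CommSq x i (terminal.from K) (terminal.from B) := ⟨terminal.hom_ext _ _⟩
  exact ⟨sq.lift, sq.fac_left⟩

theorem IsKanComplex.isInvertibleEdge {K : SSet} (hK : IsKanComplex K) (x : Δ[1] ⟶ K) :
    IsInvertibleEdge x :=
  have := hK.kanComplex
  exists_extension_of_anodyneExtensions anodyneExtensions_deltaB x

lemma IsInvertibleEdge.comp {X Y : SSet} {x : Δ[1] ⟶ X} (hx : IsInvertibleEdge x) (f : X ⟶ Y) :
    IsInvertibleEdge (x ≫ f) :=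
  let ⟨y, hy⟩ := hx
  ⟨y ≫ f, by rw [← Category.assoc, hy]⟩

lemma IsKanComplex.app_mem_GSet {K X : SSet} (hK : IsKanComplex K) (f : K ⟶ X)
    (n : SimplexCategoryᵒᵖ) (k : K.obj n) : f.app n k ∈ GSet X n := fun e => by
  rw [yE_symm_comp, ← Category.assoc]
  exact (hK.isInvertibleEdge _).comp f

def GObj.lift {K X : SSet} (f : K ⟶ X) (hf : ∀ n (k : K.obj n), f.app n k ∈ GSet X n) :
    K ⟶ GObj X where
  app n := TypeCat.ofHom fun k => ⟨f.app n k, hf n k⟩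
  naturality _ _ φ := by
    ext k
    have h := NatTrans.naturality_apply f φ k
    exact Subtype.ext h

instance (X : SSet) : Mono (epsilon X) :=
  have (n : SimplexCategoryᵒᵖ) : Mono ((epsilon X).app n) :=
    (mono_iff_injective _).2 Subtype.val_injective
  NatTrans.mono_of_mono_app _

/-- `G` is right adjoint to the identity relative to Kan complexes:
for every simplicial set `X`, Kan complex `K` and map `f : K ⟶ X`, there is a unique
`g : K ⟶ G X` with `ε_X ∘ g = f`. -/
theorem G_is_relative_right_adjoint (X K : SSet) (hK : IsKanComplex K) (f : K ⟶ X) :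
    ∃! g : K ⟶ GObj X, g ≫ epsilon X = f :=
  ⟨GObj.lift f (hK.app_mem_GSet f), rfl, fun _ hg => (cancel_mono (epsilon X)).1 hg⟩

end IndexedPaper
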